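/- Let A be a unital ring and c \in A a central element such that A is c-adically complete, i.e. the canonical ring homomorphism A \to \varprojlim_n A/c^n A is bijective, and such that the associated graded ring gr(A) = \bigoplus_{n\ge 0} c^n A/c^{n+1} A is left noetherian. Then every finitely generated left A-module M is c-adically complete: the canonical A-module homomorphism M \to \varprojlim_n M/c^n M is bijective. -/
import Mathlib


open DirectSum

section

variable {A : Type*} [Ring A]

/-- A central element of a ring. -/
structure CentralElement (A : Type*) [Ring A] where
  c : A
  central : ∀ a : A, c * a = a * c

namespace CentralElement

variable (z : CentralElement A)

theorem commute_pow (a : A) (n : ℕ) : z.c ^ n * a = a * z.c ^ n :=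
  (Commute.pow_left (z.central a) n).eq

/-- The additive subgroup `cⁿA` of a ring `A` (`c` central). -/
def cPow (n : ℕ) : AddSubgroup A where
  carrier := {x | ∃ a : A, x = z.c ^ n * a}
  add_mem' := by
    rintro x y ⟨a, rfl⟩ ⟨b, rfl⟩
    exact ⟨a + b, by rw [mul_add]⟩
  zero_mem' := ⟨0, by rw [mul_zero]⟩
  neg_mem' := by
    rintro x ⟨a, rfl⟩
    exact ⟨-a, by rw [mul_neg]⟩

theorem cPow_mul_mem {m n : ℕ} {x y : A} (hx : x ∈ z.cPow m) (hy : y ∈ z.cPow n) :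
    x * y ∈ z.cPow (m + n) := by
  obtain ⟨a, rfl⟩ := hx
  obtain ⟨b, rfl⟩ := hy
  refine ⟨a * b, ?_⟩
  rw [pow_add, mul_assoc, ← mul_assoc a, ← z.commute_pow a n, mul_assoc, mul_assoc]

instance : SetLike.GradedMonoid z.cPow where
  one_mem := ⟨1, by rw [pow_zero, one_mul]⟩
  mul_mem _ _ _ _ := z.cPow_mul_mem

/-- The graded ring `⨁ₙ cⁿA` attached to the `c`-adic filtration of `A`. -/
abbrev CAdicRees := ⨁ n, z.cPow n

theorem mem_succ_of_right {u v : z.CAdicRees}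
    (hv : ∀ n, (v n : A) ∈ z.cPow (n + 1)) (n : ℕ) :
    ((u * v) n : A) ∈ z.cPow (n + 1) := by
  classical
  rw [DirectSum.coe_mul_apply]
  refine AddSubgroup.sum_mem _ ?_
  rintro ⟨i, j⟩ hij
  obtain ⟨-, hsum⟩ := Finset.mem_filter.mp hij
  have h : (u i : A) * (v j : A) ∈ z.cPow (i + (j + 1)) :=
    z.cPow_mul_mem (u i).2 (hv j)
  have hidx : i + (j + 1) = n + 1 := by omega
  rwa [hidx] at h

theorem mem_succ_of_left {u v : z.CAdicRees}
    (hu : ∀ n, (u n : A) ∈ z.cPow (n + 1)) (n : ℕ) :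
    ((u * v) n : A) ∈ z.cPow (n + 1) := by
  classical
  rw [DirectSum.coe_mul_apply]
  refine AddSubgroup.sum_mem _ ?_
  rintro ⟨i, j⟩ hij
  obtain ⟨-, hsum⟩ := Finset.mem_filter.mp hij
  have h : (u i : A) * (v j : A) ∈ z.cPow (i + 1 + j) :=
    z.cPow_mul_mem (hu i) (v j).2
  have hidx : i + 1 + j = n + 1 := by omega
  rwa [hidx] at h

/-- The congruence relation on `⨁ₙ cⁿA` whose quotient is the associated graded ring
`gr(A) = ⨁ₙ cⁿA / cⁿ⁺¹A` of the `c`-adic filtration. -/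
def grCon : RingCon z.CAdicRees where
  r x y := ∀ n, (x n : A) - (y n : A) ∈ z.cPow (n + 1)
  iseqv := by
    refine ⟨fun x n => by simpa using (z.cPow (n + 1)).zero_mem, ?_, ?_⟩
    · intro x y h n
      simpa using (z.cPow (n + 1)).neg_mem (h n)
    · intro x y w h1 h2 n
      simpa using (z.cPow (n + 1)).add_mem (h1 n) (h2 n)
  add' := by
    intro a b a' b' h1 h2 n
    have := (z.cPow (n + 1)).add_mem (h1 n) (h2 n)
    rw [DirectSum.add_apply, DirectSum.add_apply, AddSubgroup.coe_add, AddSubgroup.coe_add]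
    convert this using 1
    abel
  mul' := by
    intro a b a' b' h1 h2 n
    have key : a * a' - b * b' = a * (a' - b') + (a - b) * b' := by noncomm_ring
    have m1 : ((a * (a' - b')) n : A) ∈ z.cPow (n + 1) :=
      z.mem_succ_of_right (fun m => by
        rw [DirectSum.sub_apply, AddSubgroup.coe_sub]; exact h2 m) n
    have m2 : (((a - b) * b') n : A) ∈ z.cPow (n + 1) :=
      z.mem_succ_of_left (fun m => by
        rw [DirectSum.sub_apply, AddSubgroup.coe_sub]; exact h1 m) n
    have : ((a * a' - b * b') n : A) ∈ z.cPow (n + 1) := by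
      rw [key, DirectSum.add_apply, AddSubgroup.coe_add]
      exact (z.cPow (n + 1)).add_mem m1 m2
    rwa [DirectSum.sub_apply, AddSubgroup.coe_sub] at this

/-- The associated graded ring `gr(A) = ⨁ₙ cⁿA / cⁿ⁺¹A` of the `c`-adic filtration of
`A`, realized as the quotient of the graded ring `⨁ₙ cⁿA` by the homogeneous two-sided
ideal `⨁ₙ cⁿ⁺¹A`. -/
abbrev CAdicGraded := z.grCon.Quotient


/-- The congruence relation `a ~ b ↔ a - b ∈ cⁿA`; its quotient ring is `A/cⁿA`. -/
def adicCon (n : ℕ) : RingCon A where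
  r a b := ∃ x : A, a - b = z.c ^ n * x
  iseqv := by
    refine ⟨fun a => ⟨0, by simp⟩, ?_, ?_⟩
    · rintro a b ⟨x, hx⟩
      exact ⟨-x, by rw [mul_neg, ← hx]; abel⟩
    · rintro a b d ⟨x, hx⟩ ⟨y, hy⟩
      exact ⟨x + y, by rw [mul_add, ← hx, ← hy]; abel⟩
  add' := by
    rintro a b a' b' ⟨x, hx⟩ ⟨y, hy⟩
    exact ⟨x + y, by rw [mul_add, ← hx, ← hy]; abel⟩
  mul' := by
    rintro a b a' b' ⟨x, hx⟩ ⟨y, hy⟩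
    refine ⟨a * y + x * b', ?_⟩
    calc a * a' - b * b' = a * (a' - b') + (a - b) * b' := by noncomm_ring
      _ = a * (z.c ^ n * y) + z.c ^ n * x * b' := by rw [hx, hy]
      _ = z.c ^ n * (a * y) + z.c ^ n * (x * b') := by
          rw [← mul_assoc, ← z.commute_pow a n, mul_assoc, mul_assoc]
      _ = z.c ^ n * (a * y + x * b') := by rw [mul_add]

/-- The transition map `A/cⁿ⁺¹A → A/cⁿA` of the inverse system. -/
def adicTransition (n : ℕ) : (z.adicCon (n + 1)).Quotient → (z.adicCon n).Quotient :=
  Quotient.map' id (by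
    rintro a b ⟨x, hx⟩
    exact ⟨z.c * x, by show a - b = _; rw [hx, pow_succ, mul_assoc]⟩)

/-- The inverse limit `lim_n A/cⁿA`, realized as the set of sequences compatible with
the transition maps. -/
def AdicLim : Type _ :=
  { f : ∀ n : ℕ, (z.adicCon n).Quotient // ∀ n : ℕ, z.adicTransition n (f (n + 1)) = f n }

/-- The canonical map `A → lim_n A/cⁿA` (the underlying function of the canonical ring
homomorphism). -/
def toAdicLim (a : A) : z.AdicLim :=
  ⟨fun n => (z.adicCon n).mk' a, fun _ => rfl⟩

section Modules

variable (M : Type*) [AddCommGroup M] [Module A M]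

/-- The submodule `cⁿM` of a left `A`-module `M` (`c` central in `A`). -/
def cPowSMul (n : ℕ) : Submodule A M where
  carrier := {x | ∃ m : M, x = z.c ^ n • m}
  add_mem' := by
    rintro x y ⟨m, rfl⟩ ⟨m', rfl⟩
    exact ⟨m + m', by rw [smul_add]⟩
  zero_mem' := ⟨0, by rw [smul_zero]⟩
  smul_mem' := by
    rintro a x ⟨m, rfl⟩
    exact ⟨a • m, by rw [smul_smul, smul_smul, z.commute_pow a n]⟩

theorem cPowSMul_antitone (n : ℕ) : z.cPowSMul M (n + 1) ≤ z.cPowSMul M n := by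
  rintro x ⟨m, rfl⟩
  exact ⟨z.c • m, by rw [pow_succ, mul_smul]⟩

/-- The transition map `M/cⁿ⁺¹M → M/cⁿM` of the inverse system. -/
def modTransition (n : ℕ) : (M ⧸ z.cPowSMul M (n + 1)) →ₗ[A] M ⧸ z.cPowSMul M n :=
  Submodule.mapQ _ _ LinearMap.id (z.cPowSMul_antitone M n)

/-- The inverse limit `lim_n M/cⁿM`, realized as the set of sequences compatible with
the transition maps. -/
def ModuleAdicLim : Type _ :=
  { f : ∀ n : ℕ, M ⧸ z.cPowSMul M n // ∀ n : ℕ, z.modTransition M n (f (n + 1)) = f n }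

/-- The canonical map `M → lim_n M/cⁿM` (the underlying function of the canonical
`A`-module homomorphism). -/
def toModuleAdicLim (x : M) : z.ModuleAdicLim M :=
  ⟨fun n => Submodule.Quotient.mk x, fun n => by
    simp [modTransition, Submodule.mapQ_apply]⟩

end Modules

end CentralElement

namespace CentralElement

variable {A : Type*} [Ring A] (z : CentralElement A)

theorem mem_cPow_zero (a : A) : a ∈ z.cPow 0 := ⟨a, by rw [pow_zero, one_mul]⟩

theorem cPow_le {m n : ℕ} (h : m ≤ n) : z.cPow n ≤ z.cPow m := by
  rintro x ⟨a, rfl⟩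
  exact ⟨z.c ^ (n - m) * a, by rw [← mul_assoc, ← pow_add, Nat.add_sub_cancel' h]⟩

theorem mul_mem_cPow {n : ℕ} (a : A) {x : A} (hx : x ∈ z.cPow n) : a * x ∈ z.cPow n := by
  obtain ⟨b, rfl⟩ := hx
  exact ⟨a * b, by rw [← mul_assoc, ← z.commute_pow a n, mul_assoc]⟩

theorem eq_zero_of_forall_mem (hinj : Function.Injective z.toAdicLim) {a : A}
    (h : ∀ n, a ∈ z.cPow n) : a = 0 := by
  apply hinj
  apply Subtype.ext
  funext n
  show ((a : (z.adicCon n).Quotient)) = ((0 : A) : (z.adicCon n).Quotient)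
  rw [RingCon.eq]
  obtain ⟨b, hb⟩ := h n
  exact ⟨b, by rw [sub_zero, hb]⟩

theorem exists_limit (hsurj : Function.Surjective z.toAdicLim) (y : ℕ → A)
    (hy : ∀ m, y (m + 1) - y m ∈ z.cPow m) : ∃ a : A, ∀ m, a - y m ∈ z.cPow m := by
  have hcomp : ∀ n, z.adicTransition n ((z.adicCon (n + 1)).mk' (y (n + 1)))
      = (z.adicCon n).mk' (y n) := by
    intro n
    show z.adicTransition n (Quotient.mk'' (y (n + 1))) = _
    unfold adicTransition
    rw [Quotient.map'_mk'']
    show ((y (n + 1) : (z.adicCon n).Quotient)) = ((y n : A) : (z.adicCon n).Quotient)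
    rw [RingCon.eq]
    obtain ⟨b, hb⟩ := hy n
    exact ⟨b, hb⟩
  obtain ⟨a, ha⟩ := hsurj ⟨fun n => (z.adicCon n).mk' (y n), hcomp⟩
  refine ⟨a, fun m => ?_⟩
  have h2 : (z.adicCon m).mk' a = (z.adicCon m).mk' (y m) := congrArg (fun f => f.1 m) ha
  obtain ⟨b, hb⟩ := (RingCon.eq _).mp h2
  exact ⟨b, hb⟩

end CentralElement

namespace CentralElement

variable {A : Type*} [Ring A] (z : CentralElement A)

theorem coe_mul_of_apply (u : z.CAdicRees) {k : ℕ} (x : A) (hx : x ∈ z.cPow k) (n : ℕ) :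
    ((u * DirectSum.of (fun i => z.cPow i) k ⟨x, hx⟩) n : A)
      = if k ≤ n then (u (n - k) : A) * x else 0 := by
  classical
  induction u using DirectSum.induction_on with
  | zero => simp
  | of m a =>
    rw [DirectSum.of_mul_of, DirectSum.coe_of_apply, DirectSum.coe_of_apply]
    by_cases h1 : k ≤ n
    · by_cases h2 : m = n - k
      · rw [if_pos h2, if_pos (by omega : m + k = n), if_pos h1, SetLike.coe_gMul]
      · rw [if_neg h2, if_neg (by omega : ¬ m + k = n), if_pos h1, ZeroMemClass.coe_zero]
        rw [ZeroMemClass.coe_zero, zero_mul]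
    · rw [if_neg (by omega : ¬ m + k = n), if_neg h1, ZeroMemClass.coe_zero]
  | add u v hu hv =>
    rw [add_mul, DirectSum.add_apply, AddSubgroup.coe_add, hu, hv, DirectSum.add_apply,
      AddSubgroup.coe_add]
    split_ifs
    · rw [add_mul]
    · rw [add_zero]

end CentralElement

/-- A recursor for building sequences by primitive recursion. -/
def natRecAux {P : ℕ → Sort*} (z0 : P 0) (s : ∀ k, P k → P (k + 1)) : ∀ k, P k
  | 0 => z0
  | k + 1 => s k (natRecAux z0 s k)

namespace CentralElement

variable {A : Type*} [Ring A] (z : CentralElement A)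

set_option synthInstance.maxHeartbeats 2000000
set_option maxHeartbeats 4000000

instance instRingCAdicRees : Ring z.CAdicRees := inferInstance

instance instRingCAdicGraded : Ring z.CAdicGraded := inferInstance

theorem coe_sum_apply {ι : Type*} (s : Finset ι) (f : ι → z.CAdicRees) (n : ℕ) :
    ((∑ i ∈ s, f i) n : A) = ∑ i ∈ s, ((f i) n : A) := by
  rw [DFinsupp.finset_sum_apply, AddSubmonoidClass.coe_finset_sum]

theorem closed_of_complete (hcomplete : Function.Bijective z.toAdicLim)
    (hnoeth : IsNoetherianRing z.CAdicGraded) {r : ℕ}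
    (N : Submodule A (Fin r → A)) (y : Fin r → A)
    (hy : ∀ n : ℕ, ∃ v ∈ N, ∀ j, y j - v j ∈ z.cPow n) : y ∈ N := by
  classical
  haveI := hnoeth
  -- the symbol map into the associated graded ring
  let sym : ∀ (n : ℕ) (a : A), a ∈ z.cPow n → z.CAdicGraded := fun n a h =>
    z.grCon.mk' (DirectSum.of (fun i => z.cPow i) n ⟨a, h⟩)
  -- the set of symbol vectors of elements of N
  let T : Set (Fin r → z.CAdicGraded) :=
    {w | ∃ (n : ℕ) (v : Fin r → A) (hv : ∀ j, v j ∈ z.cPow n),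
      v ∈ N ∧ w = fun j => sym n (v j) (hv j)}
  let G : Submodule z.CAdicGraded (Fin r → z.CAdicGraded) := Submodule.span _ T
  -- G is finitely generated, so finitely many symbol vectors span it
  obtain ⟨S, hS⟩ := IsNoetherian.noetherian G
  have hsub : ∀ s : {x // x ∈ S}, ∃ Ts : Finset (Fin r → z.CAdicGraded),
      ↑Ts ⊆ T ∧ (s : Fin r → z.CAdicGraded) ∈ Submodule.span z.CAdicGraded (Ts : Set _) := by
    intro ⟨s, hs⟩
    have h1 : s ∈ Submodule.span z.CAdicGraded T := by
      have : s ∈ G := by rw [← hS]; exact Submodule.subset_span hs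
      exact this
    exact Submodule.mem_span_finite_of_mem_span h1
  choose Ts hTsub hTmem using hsub
  let T' : Finset (Fin r → z.CAdicGraded) := S.attach.biUnion Ts
  have hT'sub : (T' : Set (Fin r → z.CAdicGraded)) ⊆ T := by
    intro w hw
    rw [Finset.coe_biUnion] at hw
    obtain ⟨s, -, hws⟩ := Set.mem_iUnion₂.mp hw
    exact hTsub s hws
  have hspanT' : Submodule.span z.CAdicGraded (T' : Set _) = G := by
    apply le_antisymm
    · rw [Submodule.span_le]
      exact hT'sub.trans Submodule.subset_span
    · rw [← hS, Submodule.span_le]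
      intro s hs
      have h1 := hTmem ⟨s, hs⟩
      refine Submodule.span_mono ?_ h1
      intro w hw
      rw [Finset.coe_biUnion]
      exact Set.mem_iUnion₂.mpr ⟨⟨s, hs⟩, Finset.mem_attach _ _, hw⟩
  -- enumerate the generators and unpack their witnesses
  have hmemT : ∀ i : Fin T'.card, ((T'.equivFin.symm i : T') : Fin r → z.CAdicGraded) ∈ T :=
    fun i => hT'sub (T'.equivFin.symm i).2
  choose nn xx hxpow hxN hsymeq using hmemT
  have hrange : Set.range (fun i : Fin T'.card => (fun j => sym (nn i) (xx i j) (hxpow i j) :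
      Fin r → z.CAdicGraded)) = (T' : Set _) := by
    have h1 : Set.range (fun i : Fin T'.card =>
        ((T'.equivFin.symm i : T') : Fin r → z.CAdicGraded)) = (T' : Set _) := by
      ext w
      constructor
      · rintro ⟨i, rfl⟩
        exact (T'.equivFin.symm i).2
      · intro hw
        exact ⟨T'.equivFin ⟨w, hw⟩, by simp⟩
    have h2 : (fun i : Fin T'.card =>
        (fun j => sym (nn i) (xx i j) (hxpow i j) : Fin r → z.CAdicGraded))
        = fun i => ((T'.equivFin.symm i : T') : Fin r → z.CAdicGraded) := by
      funext i
      exact (hsymeq i).symm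
    rw [h2, h1]
  have hspan : Submodule.span z.CAdicGraded (Set.range (fun i : Fin T'.card =>
      (fun j => sym (nn i) (xx i j) (hxpow i j) : Fin r → z.CAdicGraded))) = G := by
    rw [hrange, hspanT']
  -- the descent step
  have step : ∀ (k : ℕ) (w : Fin r → A), w ∈ N → (∀ j, w j ∈ z.cPow k) →
      ∃ b : Fin T'.card → A, (∀ i, b i ∈ z.cPow (k - nn i)) ∧
        (w - ∑ i, b i • xx i) ∈ N ∧ ∀ j, (w - ∑ i, b i • xx i) j ∈ z.cPow (k + 1) := by
    intro k w hwN hwk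
    have hmemG : (fun j => sym k (w j) (hwk j)) ∈ G :=
      Submodule.subset_span ⟨k, w, hwk, hwN, rfl⟩
    rw [← hspan] at hmemG
    obtain ⟨g, hg⟩ := (Submodule.mem_span_range_iff_exists_fun _).mp hmemG
    choose u hu using fun i => Quotient.mk''_surjective (g i)
    have hrel : ∀ j : Fin r, z.grCon
        (∑ i, u i * DirectSum.of (fun m => z.cPow m) (nn i) ⟨xx i j, hxpow i j⟩)
        (DirectSum.of (fun m => z.cPow m) k ⟨w j, hwk j⟩) := by
      intro j
      have hgj : ∑ i, g i * sym (nn i) (xx i j) (hxpow i j) = sym k (w j) (hwk j) := by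
        have h3 := congrFun hg j
        simpa only [Finset.sum_apply, Pi.smul_apply, smul_eq_mul] using h3
      have key : z.grCon.mk'
          (∑ i, u i * DirectSum.of (fun m => z.cPow m) (nn i) ⟨xx i j, hxpow i j⟩)
          = z.grCon.mk' (DirectSum.of (fun m => z.cPow m) k ⟨w j, hwk j⟩) := by
        rw [map_sum]
        have h4 : ∀ i, z.grCon.mk'
            (u i * DirectSum.of (fun m => z.cPow m) (nn i) ⟨xx i j, hxpow i j⟩)
            = g i * sym (nn i) (xx i j) (hxpow i j) := by
          intro i
          rw [map_mul, show z.grCon.mk' (u i) = g i from hu i]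
        rw [Finset.sum_congr rfl (fun i _ => h4 i), hgj]
      exact (RingCon.eq _).mp key
    set b : Fin T'.card → A := fun i => if h : nn i ≤ k then ((u i) (k - nn i) : A) else 0
      with hbdef
    refine ⟨b, fun i => ?_, ?_, ?_⟩
    · by_cases h : nn i ≤ k
      · rw [hbdef]
        simp only [dif_pos h]
        exact ((u i) (k - nn i)).2
      · rw [hbdef]
        simp only [dif_neg h]
        exact (z.cPow (k - nn i)).zero_mem
    · exact N.sub_mem hwN (Submodule.sum_mem _ fun i _ => N.smul_mem _ (hxN i))
    · intro j
      have h5 := hrel j k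
      rw [z.coe_sum_apply, DirectSum.of_eq_same] at h5
      have h6 : ∀ i : Fin T'.card,
          ((u i * DirectSum.of (fun m => z.cPow m) (nn i) ⟨xx i j, hxpow i j⟩) k : A)
          = b i * xx i j := by
        intro i
        rw [z.coe_mul_of_apply, hbdef]
        by_cases h : nn i ≤ k
        · simp only [if_pos h, dif_pos h]
        · simp only [if_neg h, dif_neg h, zero_mul]
      rw [Finset.sum_congr rfl (fun i _ => h6 i)] at h5
      have h8 : (w - ∑ i, b i • xx i) j = -((∑ i, b i * xx i j) - w j) := by
        simp only [Pi.sub_apply, Finset.sum_apply, Pi.smul_apply, smul_eq_mul, neg_sub]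
      rw [h8]
      exact (z.cPow (k + 1)).neg_mem h5
  -- choose approximating elements of N
  choose v hvN hvy using hy
  -- the increments h k ∈ N ∩ F k with y - ∑_{k<m} h k ∈ F m
  let h : ℕ → (Fin r → A) := fun k => Nat.rec (v 1) (fun k _ => v (k + 2) - v (k + 1)) k
  have hhsucc : ∀ k, h (k + 1) = v (k + 2) - v (k + 1) := fun k => rfl
  have hhN : ∀ k, h k ∈ N := by
    intro k
    cases k with
    | zero => exact hvN 1
    | succ k => rw [hhsucc]; exact N.sub_mem (hvN (k + 2)) (hvN (k + 1))
  have hhF : ∀ k j, h k j ∈ z.cPow k := by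
    intro k j
    cases k with
    | zero => exact z.mem_cPow_zero _
    | succ k =>
      rw [hhsucc]
      have e1 : (v (k + 2) - v (k + 1)) j = (y j - v (k + 1) j) - (y j - v (k + 2) j) := by
        simp only [Pi.sub_apply]; abel
      rw [e1]
      exact (z.cPow (k + 1)).sub_mem (hvy (k + 1) j)
        (z.cPow_le (by omega) (hvy (k + 2) j))
  have hsum_h : ∀ m, ∑ k ∈ Finset.range (m + 1), h k = v (m + 1) := by
    intro m
    induction m with
    | zero =>
      rw [Finset.sum_range_one]
      exact rfl
    | succ m ih => rw [Finset.sum_range_succ, ih, hhsucc]; abel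
  have hpartial : ∀ m j, (y - ∑ k ∈ Finset.range m, h k) j ∈ z.cPow m := by
    intro m j
    cases m with
    | zero => exact z.mem_cPow_zero _
    | succ m =>
      have e2 : (y - ∑ k ∈ Finset.range (m + 1), h k) j = y j - v (m + 1) j := by
        rw [hsum_h]; rfl
      rw [e2]
      exact hvy (m + 1) j
  -- iterate the descent step
  let bchoice : ∀ (k : ℕ) (w : Fin r → A), w ∈ N → (∀ j, w j ∈ z.cPow k) →
      (Fin T'.card → A) := fun k w h1 h2 => Classical.choose (step k w h1 h2)
  have bspec : ∀ k w h1 h2, (∀ i, bchoice k w h1 h2 i ∈ z.cPow (k - nn i)) ∧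
      (w - ∑ i, bchoice k w h1 h2 i • xx i) ∈ N ∧
      (∀ j, (w - ∑ i, bchoice k w h1 h2 i • xx i) j ∈ z.cPow (k + 1)) :=
    fun k w h1 h2 => Classical.choose_spec (step k w h1 h2)
  let W : ∀ k : ℕ, {w : Fin r → A // w ∈ N ∧ ∀ j, w j ∈ z.cPow k} :=
    natRecAux ⟨h 0, hhN 0, hhF 0⟩
      (fun k ih =>
        ⟨h (k + 1) + (ih.1 - ∑ i, bchoice k ih.1 ih.2.1 ih.2.2 i • xx i),
          N.add_mem (hhN (k + 1)) (bspec k ih.1 ih.2.1 ih.2.2).2.1,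
          fun j => (z.cPow (k + 1)).add_mem (hhF (k + 1) j)
            ((bspec k ih.1 ih.2.1 ih.2.2).2.2 j)⟩)
  let B : ℕ → Fin T'.card → A := fun k => bchoice k (W k).1 (W k).2.1 (W k).2.2
  let ρ : ℕ → (Fin r → A) := fun k => (W k).1 - ∑ i, B k i • xx i
  have hW0 : (W 0).1 = h 0 := rfl
  have hWsucc : ∀ k, (W (k + 1)).1 = h (k + 1) + ρ k := fun k => rfl
  have hBk : ∀ k i, B k i ∈ z.cPow (k - nn i) :=
    fun k i => (bspec k (W k).1 (W k).2.1 (W k).2.2).1 i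
  have hρN : ∀ k, ρ k ∈ N := fun k => (bspec k (W k).1 (W k).2.1 (W k).2.2).2.1
  have hρF : ∀ k j, ρ k j ∈ z.cPow (k + 1) :=
    fun k j => (bspec k (W k).1 (W k).2.1 (W k).2.2).2.2 j
  -- the invariant
  have inv : ∀ m, ∑ k ∈ Finset.range (m + 1), h k
      = (∑ k ∈ Finset.range (m + 1), ∑ i, B k i • xx i) + ρ m := by
    intro m
    induction m with
    | zero =>
      rw [Finset.sum_range_one, Finset.sum_range_one]
      rw [show ρ 0 = (W 0).1 - ∑ i, B 0 i • xx i from rfl, hW0]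
      abel
    | succ m ih =>
      rw [Finset.sum_range_succ, ih, Finset.sum_range_succ
        (f := fun k => ∑ i, B k i • xx i) (n := m + 1)]
      have e3 : h (m + 1) = (W (m + 1)).1 - ρ m := by rw [hWsucc]; abel
      rw [e3, show ρ (m + 1) = (W (m + 1)).1 - ∑ i, B (m + 1) i • xx i from rfl]
      abel
  have htail : ∀ m j, (y - ∑ k ∈ Finset.range (m + 1), ∑ i, B k i • xx i) j
      ∈ z.cPow (m + 1) := by
    intro m j
    have e4 : y - ∑ k ∈ Finset.range (m + 1), ∑ i, B k i • xx i
        = (y - ∑ k ∈ Finset.range (m + 1), h k) + ρ m := by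
      rw [inv m]; abel
    rw [e4]
    exact (z.cPow (m + 1)).add_mem (hpartial (m + 1) j) (hρF m j)
  -- sum the series of coefficients
  have hseries : ∀ i : Fin T'.card, ∃ u : A,
      ∀ m, u - ∑ k ∈ Finset.range m, B k i ∈ z.cPow (m - nn i) := by
    intro i
    obtain ⟨u, hu⟩ := z.exists_limit hcomplete.2
      (fun m => ∑ k ∈ Finset.range (m + nn i), B k i)
      (fun m => by
        show (∑ k ∈ Finset.range (m + 1 + nn i), B k i)
          - (∑ k ∈ Finset.range (m + nn i), B k i) ∈ z.cPow m
        rw [show m + 1 + nn i = (m + nn i) + 1 from by omega, Finset.sum_range_succ]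
        have e5 : (∑ k ∈ Finset.range (m + nn i), B k i) + B (m + nn i) i
            - ∑ k ∈ Finset.range (m + nn i), B k i = B (m + nn i) i := by abel
        rw [e5]
        have h9 := hBk (m + nn i) i
        rwa [Nat.add_sub_cancel] at h9)
    refine ⟨u, fun m => ?_⟩
    by_cases hc : nn i ≤ m
    · have h10 := hu (m - nn i)
      rwa [Nat.sub_add_cancel hc] at h10
    · rw [Nat.sub_eq_zero_of_le (by omega)]
      exact z.mem_cPow_zero _
  choose uu huu using hseries
  -- the limit identity
  have hfinal : ∀ m j, (y - ∑ i, uu i • xx i) j ∈ z.cPow m := by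
    intro m j
    have e6 : ∑ k ∈ Finset.range (m + 1), ∑ i, B k i • xx i
        = ∑ i, (∑ k ∈ Finset.range (m + 1), B k i) • xx i := by
      rw [Finset.sum_comm]
      exact Finset.sum_congr rfl fun i _ => (Finset.sum_smul).symm
    have e7 : ∑ i, (uu i - ∑ k ∈ Finset.range (m + 1), B k i) • xx i
        = (∑ i, uu i • xx i) - ∑ i, (∑ k ∈ Finset.range (m + 1), B k i) • xx i := by
      rw [← Finset.sum_sub_distrib]
      exact Finset.sum_congr rfl fun i _ => sub_smul _ _ _
    have e8 : y - ∑ i, uu i • xx i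
        = (y - ∑ k ∈ Finset.range (m + 1), ∑ i, B k i • xx i)
          - ∑ i, (uu i - ∑ k ∈ Finset.range (m + 1), B k i) • xx i := by
      rw [e7, e6]; abel
    rw [e8]
    have mem2 : (∑ i, (uu i - ∑ k ∈ Finset.range (m + 1), B k i) • xx i) j
        ∈ z.cPow (m + 1) := by
      have e9 : (∑ i, (uu i - ∑ k ∈ Finset.range (m + 1), B k i) • xx i) j
          = ∑ i, (uu i - ∑ k ∈ Finset.range (m + 1), B k i) * xx i j := by
        simp only [Finset.sum_apply, Pi.smul_apply, smul_eq_mul]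
      rw [e9]
      refine AddSubgroup.sum_mem _ fun i _ => ?_
      have d2 := z.cPow_mul_mem (huu i (m + 1)) (hxpow i j)
      exact z.cPow_le (by omega) d2
    have mem3 := (z.cPow (m + 1)).sub_mem (htail m j) mem2
    exact z.cPow_le (by omega) mem3
  have hzero : y = ∑ i, uu i • xx i := by
    funext j
    have h11 : (y - ∑ i, uu i • xx i) j = 0 :=
      z.eq_zero_of_forall_mem hcomplete.1 (fun m => hfinal m j)
    have h12 : y j - (∑ i, uu i • xx i) j = 0 := h11
    exact sub_eq_zero.mp h12
  rw [hzero]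
  exact Submodule.sum_mem _ fun i _ => N.smul_mem _ (hxN i)

end CentralElement

open CentralElement

set_option maxHeartbeats 1000000 in
/-- let `A` be a unital ring and `c ∈ A` a central element such that `A` is
`c`-adically complete (the canonical ring homomorphism `A → lim_n A/cⁿA` is bijective)
and such that the associated graded ring `gr(A) = ⨁ₙ cⁿA/cⁿ⁺¹A` is left noetherian.
Then every finitely generated left `A`-module `M` is `c`-adically complete: the
canonical `A`-module homomorphism `M → lim_n M/cⁿM` is bijective. -/
theorem finite_module_adicComplete
    (z : CentralElement A)
    (hcomplete : Function.Bijective z.toAdicLim)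
    (hnoeth : IsNoetherianRing z.CAdicGraded)
    (M : Type*) [AddCommGroup M] [Module A M] [Module.Finite A M] :
    Function.Bijective (z.toModuleAdicLim M) := by
  classical
  obtain ⟨r, f, hf⟩ := Module.Finite.exists_fin (R := A) (M := M)
  let π : (Fin r → A) →ₗ[A] M :=
    { toFun := fun v => ∑ j, v j • f j
      map_add' := by
        intro a b
        simp only [Pi.add_apply, add_smul, Finset.sum_add_distrib]
      map_smul' := by
        intro a v
        simp only [Pi.smul_apply, smul_eq_mul, mul_smul, RingHom.id_apply, Finset.smul_sum] }
  have hπsurj : ∀ m : M, ∃ v, π v = m := by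
    intro m
    have h1 : m ∈ Submodule.span A (Set.range f) := by rw [hf]; exact Submodule.mem_top
    obtain ⟨c, hc⟩ := (Submodule.mem_span_range_iff_exists_fun A).mp h1
    exact ⟨c, hc⟩
  constructor
  · -- injectivity
    intro x₁ x₂ hx
    have hdiff : ∀ n, x₁ - x₂ ∈ z.cPowSMul M n := by
      intro n
      have h1 : (Submodule.Quotient.mk x₁ : M ⧸ z.cPowSMul M n) = Submodule.Quotient.mk x₂ :=
        congrArg (fun F => F.1 n) hx
      exact (Submodule.Quotient.eq _).mp h1
    obtain ⟨y₁, hy₁⟩ := hπsurj x₁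
    obtain ⟨y₂, hy₂⟩ := hπsurj x₂
    have hyN : ∀ n : ℕ, ∃ v ∈ LinearMap.ker π, ∀ j, (y₁ - y₂) j - v j ∈ z.cPow n := by
      intro n
      obtain ⟨m, hm⟩ := hdiff n
      obtain ⟨w, hw⟩ := hπsurj m
      refine ⟨(y₁ - y₂) - z.c ^ n • w, ?_, ?_⟩
      · rw [LinearMap.mem_ker, map_sub, map_sub, map_smul, hy₁, hy₂, hw, ← hm, sub_self]
      · intro j
        have e1 : (y₁ - y₂) j - ((y₁ - y₂) - z.c ^ n • w) j = z.c ^ n * w j := by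
          simp only [Pi.sub_apply, Pi.smul_apply, smul_eq_mul]
          abel
        rw [e1]
        exact ⟨w j, rfl⟩
    have hker := z.closed_of_complete hcomplete hnoeth (LinearMap.ker π) (y₁ - y₂) hyN
    have h2 : x₁ - x₂ = 0 := by
      rw [← hy₁, ← hy₂, ← map_sub]
      exact LinearMap.mem_ker.mp hker
    exact sub_eq_zero.mp h2
  · -- surjectivity
    rintro ⟨F, hF⟩
    have hrep : ∀ n, ∃ m : M, Submodule.Quotient.mk m = F n := fun n =>
      Submodule.Quotient.mk_surjective _ (F n)
    choose mrep hmrep using hrep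
    have hstep : ∀ n, ∃ t : M, mrep (n + 1) - mrep n = z.c ^ n • t := by
      intro n
      have h1 := hF n
      rw [← hmrep (n + 1), ← hmrep n] at h1
      have h2 : (Submodule.Quotient.mk (mrep (n + 1)) : M ⧸ z.cPowSMul M n)
          = Submodule.Quotient.mk (mrep n) := h1
      obtain ⟨t, ht⟩ := (Submodule.Quotient.eq _).mp h2
      exact ⟨t, ht⟩
    choose t ht using hstep
    choose s hs using fun n => hπsurj (t n)
    obtain ⟨y0, hy0⟩ := hπsurj (mrep 0)
    set Y : ℕ → (Fin r → A) := fun m => y0 + ∑ k ∈ Finset.range m, z.c ^ k • s k with hY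
    have hYsucc : ∀ m, Y (m + 1) = Y m + z.c ^ m • s m := by
      intro m
      rw [hY]
      simp only [Finset.sum_range_succ]
      abel
    have hπY : ∀ m, π (Y m) = mrep m := by
      intro m
      induction m with
      | zero =>
        rw [hY]
        simp only [Finset.range_zero, Finset.sum_empty, add_zero]
        exact hy0
      | succ m ih =>
        rw [hYsucc, map_add, ih, map_smul, hs]
        rw [eq_comm, ← sub_eq_iff_eq_add']
        exact ht m
    have hcauchy : ∀ j, ∃ a : A, ∀ m, a - Y m j ∈ z.cPow m := by
      intro j
      refine z.exists_limit hcomplete.2 (fun m => Y m j) (fun m => ?_)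
      have e1 : Y (m + 1) j - Y m j = z.c ^ m * s m j := by
        rw [hYsucc]
        simp only [Pi.add_apply, Pi.smul_apply, smul_eq_mul]
        abel
      rw [e1]
      exact ⟨s m j, rfl⟩
    choose a ha using hcauchy
    refine ⟨π a, ?_⟩
    apply Subtype.ext
    funext n
    show (Submodule.Quotient.mk (π a) : M ⧸ z.cPowSMul M n) = F n
    rw [← hmrep n, Submodule.Quotient.eq]
    have h3 : ∀ j, ∃ b, a j - Y n j = z.c ^ n * b := fun j => ha j n
    choose bb hbb using h3
    have e2 : π a - mrep n = z.c ^ n • π bb := by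
      rw [← hπY n, ← map_smul, ← map_sub]
      congr 1
      funext j
      simp only [Pi.sub_apply, Pi.smul_apply, smul_eq_mul]
      exact hbb j
    exact ⟨π bb, e2⟩

end
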